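/- Let π be a bounded probability density on [0,1] and let κ ≥ 0. For each ρ ∈ (0,1), let g_ρ : [0,1]² → ℝ be a bounded measurable function satisfying, for all x, y ∈ [0,1], g_ρ(x,y) = ρ·π(y)·∫*_{u=x}^{y} [g_ρ(x,u) + g_ρ(y,u)] du + ρ·κ·π(y)·∫*_{u=x}^{y} [ρ·π(u) + 1−ρ] du. Then for every x, y ∈ [0,1]: lim_{ρ → 1⁻} (1−ρ)·g_ρ(x,y) = κ·π(y)·∫*_{u=x}^{y} π(u) du. -/

import Mathlib

/-!
Write `P(a,b) = ∫*_{u=a}^{b} π(u) du` and `D_ρ(a,b) = (1-ρ) g_ρ(a,b) - κ π(b) P(a,b)`.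
Integrating by parts against the primitive of `π` gives
`∫*_{u=a}^{b} π(u) (α (P(a,u) + P(b,u)) + β) du = (α + β) P(a,b)`.
With `α = κ, β = 0` this shows that `D_ρ` solves the equation of `g_ρ` up to a forcing term
bounded by `2κ(1-ρ)² π(b)`. In general it shows that the equation maps a bound
`|D_ρ(a,b)| ≤ π(b) (α P(a,b) + c)` to the same bound with `α` replaced by `ρ α + 2ρc`.
Iterating from the crude bound given by the boundedness of `g_ρ` gives
`|D_ρ| ≤ π(b) (2ρc/(1-ρ) + c) = O(1-ρ)`.
-/

open MeasureTheory

/-- Circular integral: `∫*_{u=a}^{b} h(u) du` on the circle `[0,1)`.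
It equals `∫_a^b h` if `a ≤ b` and `∫_a^1 h + ∫_0^b h` if `a > b`. -/
noncomputable def cint (a b : ℝ) (h : ℝ → ℝ) : ℝ :=
  if a ≤ b then ∫ u in a..b, h u
  else (∫ u in a..(1 : ℝ), h u) + ∫ u in (0 : ℝ)..b, h u

open Set

theorem integral_mul_integral_eq_sq_div_two {f : ℝ → ℝ} {a b : ℝ}
    (hf : IntervalIntegrable f volume a b) :
    ∫ x in a..b, f x * ∫ t in a..x, f t = (∫ x in a..b, f x) ^ 2 / 2 := by
  set F : ℝ → ℝ := fun x => ∫ t in a..x, f t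
  have hF := hf.absolutelyContinuousOnInterval_intervalIntegral (c := a) left_mem_uIcc
  have hparts := hF.integral_deriv_mul_eq_sub hF
  have hderiv : ∀ᵐ x, x ∈ uIoc a b → deriv F x * F x + F x * deriv F x = 2 * (f x * F x) := by
    filter_upwards [hf.ae_hasDerivAt_integral] with x hx hxab
    rw [(hx (uIoc_subset_uIcc hxab) a left_mem_uIcc).deriv]
    ring
  rw [intervalIntegral.integral_congr_ae hderiv, intervalIntegral.integral_const_mul] at hparts
  simp only [F, intervalIntegral.integral_same, mul_zero, sub_zero] at hparts
  linarith

theorem integral_mul_primitive {f : ℝ → ℝ} (hf : Integrable f) (c a b : ℝ) :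
    ∫ x in a..b, f x * ∫ t in c..x, f t
      = ((∫ t in c..b, f t) ^ 2 - (∫ t in c..a, f t) ^ 2) / 2 := by
  have hI : ∀ s t, IntervalIntegrable f volume s t := fun s t => hf.intervalIntegrable
  have hsplit : ∀ x, f x * ∫ t in c..x, f t
      = (∫ t in c..a, f t) * f x + f x * ∫ t in a..x, f t := fun x => by
    rw [← intervalIntegral.integral_add_adjacent_intervals (hI c a) (hI a x)]; ring
  simp_rw [hsplit]
  rw [intervalIntegral.integral_add ((hI a b).const_mul _) ?_,
    intervalIntegral.integral_const_mul, integral_mul_integral_eq_sq_div_two (hI a b),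
    ← intervalIntegral.integral_interval_sub_left (hI c b) (hI c a)]
  · ring
  · exact (hI a b).mul_continuousOn (intervalIntegral.continuous_primitive hI a).continuousOn

def circArc (a b : ℝ) : Set ℝ := if a ≤ b then Ioc a b else Ioc a 1 ∪ Ioc 0 b

theorem measurableSet_circArc (a b : ℝ) : MeasurableSet (circArc a b) := by
  unfold circArc
  split_ifs
  exacts [measurableSet_Ioc, measurableSet_Ioc.union measurableSet_Ioc]

variable {a b : ℝ} {h k w : ℝ → ℝ}

theorem circArc_subset_Ioc (ha : a ∈ Icc (0 : ℝ) 1) (hb : b ∈ Icc (0 : ℝ) 1) :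
    circArc a b ⊆ Ioc 0 1 := by
  unfold circArc
  split_ifs
  · exact Ioc_subset_Ioc ha.1 hb.2
  · exact union_subset (Ioc_subset_Ioc_left ha.1) (Ioc_subset_Ioc_right hb.2)

theorem cint_eq_setIntegral_circArc (hh : IntegrableOn h (Ioc 0 1))
    (ha : a ∈ Icc (0 : ℝ) 1) (hb : b ∈ Icc (0 : ℝ) 1) :
    cint a b h = ∫ u in circArc a b, h u := by
  unfold cint circArc
  split_ifs with hab
  · exact intervalIntegral.integral_of_le hab
  · rw [intervalIntegral.integral_of_le ha.2, intervalIntegral.integral_of_le hb.1,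
      setIntegral_union (Ioc_disjoint_Ioc_of_le (not_le.1 hab).le).symm measurableSet_Ioc
        (hh.mono_set (Ioc_subset_Ioc_left ha.1)) (hh.mono_set (Ioc_subset_Ioc_right hb.2))]

theorem cint_congr (ha : a ∈ Icc (0 : ℝ) 1) (hb : b ∈ Icc (0 : ℝ) 1)
    (hhk : EqOn h k (Icc 0 1)) : cint a b h = cint a b k := by
  have hsub : ∀ {s t}, s ∈ Icc (0 : ℝ) 1 → t ∈ Icc (0 : ℝ) 1 → EqOn h k (uIcc s t) :=
    fun hs ht => hhk.mono (uIcc_subset_Icc hs ht)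
  unfold cint
  split_ifs
  · exact intervalIntegral.integral_congr (hsub ha hb)
  · rw [intervalIntegral.integral_congr (hsub ha (right_mem_Icc.2 zero_le_one)),
      intervalIntegral.integral_congr (hsub (left_mem_Icc.2 zero_le_one) hb)]

theorem cint_const_mul (c : ℝ) : cint a b (fun u => c * h u) = c * cint a b h := by
  unfold cint
  split_ifs <;> simp only [intervalIntegral.integral_const_mul, mul_add]

theorem cint_add (hh : IntegrableOn h (Ioc 0 1)) (hk : IntegrableOn k (Ioc 0 1))
    (ha : a ∈ Icc (0 : ℝ) 1) (hb : b ∈ Icc (0 : ℝ) 1) :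
    cint a b (fun u => h u + k u) = cint a b h + cint a b k := by
  have hsub := circArc_subset_Ioc ha hb
  rw [cint_eq_setIntegral_circArc (h := fun u => h u + k u) (hh.add hk) ha hb,
    cint_eq_setIntegral_circArc hh ha hb, cint_eq_setIntegral_circArc hk ha hb,
    integral_add (hh.mono_set hsub) (hk.mono_set hsub)]

theorem abs_cint_le_cint (hh : IntegrableOn h (Ioc 0 1)) (hk : IntegrableOn k (Ioc 0 1))
    (ha : a ∈ Icc (0 : ℝ) 1) (hb : b ∈ Icc (0 : ℝ) 1) (hhk : ∀ u ∈ Icc (0 : ℝ) 1, |h u| ≤ k u) :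
    |cint a b h| ≤ cint a b k := by
  have hsub := circArc_subset_Ioc ha hb
  rw [cint_eq_setIntegral_circArc hh ha hb, cint_eq_setIntegral_circArc hk ha hb]
  refine (abs_integral_le_integral_abs).trans (setIntegral_mono_on (hh.mono_set hsub).abs
    (hk.mono_set hsub) (measurableSet_circArc a b) fun u hu => hhk u ?_)
  exact Ioc_subset_Icc_self (hsub hu)

theorem cint_mem_Icc (hh : IntegrableOn h (Ioc 0 1)) (h0 : ∀ u ∈ Icc (0 : ℝ) 1, 0 ≤ h u)
    (ha : a ∈ Icc (0 : ℝ) 1) (hb : b ∈ Icc (0 : ℝ) 1) :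
    cint a b h ∈ Icc 0 (∫ u in (0 : ℝ)..1, h u) := by
  have hsub := circArc_subset_Ioc ha hb
  have h0' : ∀ u ∈ Ioc (0 : ℝ) 1, 0 ≤ h u := fun u hu => h0 u (Ioc_subset_Icc_self hu)
  rw [cint_eq_setIntegral_circArc hh ha hb, intervalIntegral.integral_of_le zero_le_one]
  exact ⟨setIntegral_nonneg (measurableSet_circArc a b) fun u hu => h0' u (hsub hu),
    setIntegral_mono_set hh ((ae_restrict_iff' measurableSet_Ioc).2 (ae_of_all _ h0'))
      hsub.eventuallyLE⟩

theorem cint_one_mem_Icc (ha : a ∈ Icc (0 : ℝ) 1) (hb : b ∈ Icc (0 : ℝ) 1) :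
    cint a b (fun _ => 1) ∈ Icc 0 1 := by
  simpa using cint_mem_Icc (h := fun _ => 1) (integrableOn_const measure_Ioc_lt_top.ne)
    (fun _ _ => zero_le_one) ha hb

theorem cint_eq_primitive (hw : Integrable w) (hw1 : ∫ u in (0 : ℝ)..1, w u = 1)
    (a b : ℝ) :
    cint a b w = (∫ t in 0..b, w t) - (∫ t in 0..a, w t) + if b < a then 1 else 0 := by
  have hI : ∀ s t, IntervalIntegrable w volume s t := fun s t => hw.intervalIntegrable
  unfold cint
  split_ifs with hab hba hba
  · exact absurd hba (not_lt.2 hab)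
  · rw [intervalIntegral.integral_interval_sub_left (hI 0 b) (hI 0 a), add_zero]
  · rw [← intervalIntegral.integral_interval_sub_left (hI 0 1) (hI 0 a), hw1]
    ring
  · exact absurd (not_le.1 hab) hba

theorem measurable_cint_right (hw : Integrable w) (a : ℝ) :
    Measurable fun b => cint a b w := by
  have hI : ∀ s t, IntervalIntegrable w volume s t := fun s t => hw.intervalIntegrable
  exact Measurable.ite measurableSet_Ici
    (intervalIntegral.continuous_primitive hI a).measurable
    (measurable_const.add (intervalIntegral.continuous_primitive hI 0).measurable)

theorem cint_mul_cint_add_cint (hw : Integrable w) (hw1 : ∫ u in (0 : ℝ)..1, w u = 1)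
    (ha : a ∈ Icc (0 : ℝ) 1) (hb : b ∈ Icc (0 : ℝ) 1) (α β : ℝ) :
    cint a b (fun u => w u * (α * (cint a u w + cint b u w) + β)) = (α + β) * cint a b w := by
  set G : ℝ → ℝ := fun x => ∫ t in 0..x, w t
  have hI : ∀ s t, IntervalIntegrable w volume s t := fun s t => hw.intervalIntegrable
  have hP : ∀ c u, cint c u w = G u - G c + if u < c then 1 else 0 :=
    cint_eq_primitive hw hw1
  have hG0 : G 0 = 0 := intervalIntegral.integral_same
  have hG1 : G 1 = 1 := hw1
  have piece : ∀ {s t : ℝ} (K L : ℝ), s ≤ t →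
      (∀ u ∈ Ioo s t, w u * (α * (cint a u w + cint b u w) + β) = K * (w u * G u) + L * w u) →
      ∫ u in s..t, w u * (α * (cint a u w + cint b u w) + β)
        = K * ((G t ^ 2 - G s ^ 2) / 2) + L * (G t - G s) := by
    intro s t K L hst hpt
    rw [intervalIntegral.integral_of_le hst, integral_Ioc_eq_integral_Ioo,
      setIntegral_congr_fun measurableSet_Ioo hpt, ← integral_Ioc_eq_integral_Ioo,
      ← intervalIntegral.integral_of_le hst, intervalIntegral.integral_add
        (((hI s t).mul_continuousOn
          (intervalIntegral.continuous_primitive hI 0).continuousOn).const_mul K)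
        ((hI s t).const_mul L),
      intervalIntegral.integral_const_mul, intervalIntegral.integral_const_mul,
      integral_mul_primitive hw, intervalIntegral.integral_interval_sub_left (hI 0 t) (hI 0 s)]
  rw [hP a b, cint]
  split_ifs with hab hba hba
  · exact absurd hba (not_lt.2 hab)
  · rw [piece (2 * α) (α * (1 - G a - G b) + β) hab fun u hu => ?_]
    · ring
    · rw [hP, hP, if_neg (not_lt.2 hu.1.le), if_pos hu.2]
      ring
  · rw [piece (2 * α) (β - α * (G a + G b)) ha.2 fun u hu => ?_,
      piece (2 * α) (α * (2 - G a - G b) + β) hb.1 fun u hu => ?_, hG0, hG1]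
    · ring
    · rw [hP, hP, if_pos (hu.2.trans hba), if_pos hu.2]
      ring
    · rw [hP, hP, if_neg (not_lt.2 hu.1.le), if_neg (not_lt.2 (hba.trans hu.1).le)]
      ring
  · exact absurd (not_le.1 hab) hba

theorem integrableOn_mul_cint (hw : Integrable w) (hw0 : ∀ u, 0 ≤ w u)
    (hw1 : ∫ u in (0 : ℝ)..1, w u = 1) (ha : a ∈ Icc (0 : ℝ) 1) :
    IntegrableOn (fun u => w u * cint a u w) (Ioc 0 1) := by
  refine hw.integrableOn.mul_bdd (c := 1) (measurable_cint_right hw a).aestronglyMeasurable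
    ((ae_restrict_iff' measurableSet_Ioc).2 (ae_of_all _ fun u hu => ?_))
  have := hw1 ▸ cint_mem_Icc hw.integrableOn (fun u _ => hw0 u) ha (Ioc_subset_Icc_self hu)
  rw [Real.norm_eq_abs, abs_le]
  exact ⟨by linarith [this.1], this.2⟩

theorem integrableOn_mul_cint_add_cint (hw : Integrable w) (hw0 : ∀ u, 0 ≤ w u)
    (hw1 : ∫ u in (0 : ℝ)..1, w u = 1) (ha : a ∈ Icc (0 : ℝ) 1) (hb : b ∈ Icc (0 : ℝ) 1)
    (α β : ℝ) :
    IntegrableOn (fun u => w u * (α * (cint a u w + cint b u w) + β)) (Ioc 0 1) :=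
  IntegrableOn.congr_fun (((integrableOn_mul_cint hw hw0 hw1 ha).add
    (integrableOn_mul_cint hw hw0 hw1 hb)).const_mul α |>.add (hw.integrableOn.const_mul β))
    (fun u _ => by simp only [Pi.add_apply]; ring) measurableSet_Ioc

section Contraction

variable {D : ℝ → ℝ → ℝ} {ρ c : ℝ}

theorem abs_le_of_abs_le_cint_step (hw : Integrable w) (hw0 : ∀ u, 0 ≤ w u)
    (hw1 : ∫ u in (0 : ℝ)..1, w u = 1)
    (hDint : ∀ a ∈ Icc (0 : ℝ) 1, IntegrableOn (D a) (Ioc 0 1)) (hρ : 0 ≤ ρ)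
    (hD : ∀ a ∈ Icc (0 : ℝ) 1, ∀ b ∈ Icc (0 : ℝ) 1,
      |D a b| ≤ ρ * w b * |cint a b (fun u => D a u + D b u)| + w b * c)
    {α β : ℝ} (hαβ : ∀ a ∈ Icc (0 : ℝ) 1, ∀ b ∈ Icc (0 : ℝ) 1,
      |D a b| ≤ w b * (α * cint a b w + β)) :
    ∀ a ∈ Icc (0 : ℝ) 1, ∀ b ∈ Icc (0 : ℝ) 1,
      |D a b| ≤ w b * (ρ * (α + 2 * β) * cint a b w + c) := by
  intro a ha b hb
  have hsum : |cint a b (fun u => D a u + D b u)| ≤ (α + 2 * β) * cint a b w := by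
    rw [← cint_mul_cint_add_cint hw hw1 ha hb]
    refine abs_cint_le_cint ((hDint a ha).add (hDint b hb))
      (integrableOn_mul_cint_add_cint hw hw0 hw1 ha hb α (2 * β)) ha hb fun u hu => ?_
    linear_combination abs_add_le (D a u) (D b u) + hαβ a ha u hu + hαβ b hb u hu
  calc |D a b| ≤ ρ * w b * |cint a b (fun u => D a u + D b u)| + w b * c := hD a ha b hb
    _ ≤ ρ * w b * ((α + 2 * β) * cint a b w) + w b * c := by
      grw [hsum]
      exact mul_nonneg hρ (hw0 b)
    _ = w b * (ρ * (α + 2 * β) * cint a b w + c) := by ring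

theorem abs_le_of_abs_le_cint_of_bounded (hw0 : ∀ u, 0 ≤ w u)
    (hDint : ∀ a ∈ Icc (0 : ℝ) 1, IntegrableOn (D a) (Ioc 0 1))
    {d : ℝ} (hDd : ∀ a ∈ Icc (0 : ℝ) 1, ∀ b ∈ Icc (0 : ℝ) 1, |D a b| ≤ d) (hρ : 0 ≤ ρ)
    (hD : ∀ a ∈ Icc (0 : ℝ) 1, ∀ b ∈ Icc (0 : ℝ) 1,
      |D a b| ≤ ρ * w b * |cint a b (fun u => D a u + D b u)| + w b * c) :
    ∀ a ∈ Icc (0 : ℝ) 1, ∀ b ∈ Icc (0 : ℝ) 1, |D a b| ≤ w b * (2 * ρ * d + c) := by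
  intro a ha b hb
  have hd : 0 ≤ d := (abs_nonneg _).trans (hDd a ha a ha)
  have hsum : |cint a b (fun u => D a u + D b u)| ≤ 2 * d := by
    refine (abs_cint_le_cint (h := fun u => D a u + D b u) (k := fun _ => 2 * d * 1)
      ((hDint a ha).add (hDint b hb)) (integrableOn_const measure_Ioc_lt_top.ne) ha hb
      fun u hu => ?_).trans ?_
    · linarith [abs_add_le (D a u) (D b u), hDd a ha u hu, hDd b hb u hu]
    · rw [cint_const_mul]
      exact mul_le_of_le_one_right (by positivity) (cint_one_mem_Icc ha hb).2
  calc |D a b| ≤ ρ * w b * |cint a b (fun u => D a u + D b u)| + w b * c := hD a ha b hb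
    _ ≤ ρ * w b * (2 * d) + w b * c := by grw [hsum]; exact mul_nonneg hρ (hw0 b)
    _ = w b * (2 * ρ * d + c) := by ring

theorem abs_le_of_abs_le_cint (hw : Integrable w) (hw0 : ∀ u, 0 ≤ w u)
    (hw1 : ∫ u in (0 : ℝ)..1, w u = 1)
    (hDint : ∀ a ∈ Icc (0 : ℝ) 1, IntegrableOn (D a) (Ioc 0 1))
    {d : ℝ} (hDd : ∀ a ∈ Icc (0 : ℝ) 1, ∀ b ∈ Icc (0 : ℝ) 1, |D a b| ≤ d)
    (hρ0 : 0 ≤ ρ) (hρ1 : ρ < 1)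
    (hD : ∀ a ∈ Icc (0 : ℝ) 1, ∀ b ∈ Icc (0 : ℝ) 1,
      |D a b| ≤ ρ * w b * |cint a b (fun u => D a u + D b u)| + w b * c) :
    ∀ a ∈ Icc (0 : ℝ) 1, ∀ b ∈ Icc (0 : ℝ) 1,
      |D a b| ≤ w b * (2 * ρ * c / (1 - ρ) * cint a b w + c) := by
  set Q : ℝ → Prop := fun α => ∀ a ∈ Icc (0 : ℝ) 1, ∀ b ∈ Icc (0 : ℝ) 1,
    |D a b| ≤ w b * (α * cint a b w + c)
  have step : ∀ {α β : ℝ}, (∀ a ∈ Icc (0 : ℝ) 1, ∀ b ∈ Icc (0 : ℝ) 1,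
      |D a b| ≤ w b * (α * cint a b w + β)) → Q (ρ * (α + 2 * β)) :=
    abs_le_of_abs_le_cint_step hw hw0 hw1 hDint hρ0 hD
  have base : Q (ρ * (0 + 2 * (2 * ρ * d + c))) := step fun a ha b hb => by
    simpa using abs_le_of_abs_le_cint_of_bounded hw0 hDint hDd hρ0 hD a ha b hb
  set q := 2 * ρ * c / (1 - ρ)
  have hq : ρ * q + 2 * ρ * c = q := by
    have : 1 - ρ ≠ 0 := (sub_pos.2 hρ1).ne'
    simp only [q]
    field_simp
    ring
  set α₀ := ρ * (0 + 2 * (2 * ρ * d + c))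
  have iterate : ∀ n : ℕ, Q (ρ ^ n * (α₀ - q) + q) := by
    intro n
    induction n with
    | zero => simpa using base
    | succ n ih =>
      have e : ρ * (ρ ^ n * (α₀ - q) + q + 2 * c) = ρ ^ (n + 1) * (α₀ - q) + q := by
        linear_combination hq
      exact e ▸ step ih
  intro a ha b hb
  have hlim := (((tendsto_pow_atTop_nhds_zero_of_lt_one hρ0 hρ1).mul_const (α₀ - q)).add_const q
    |>.mul_const (cint a b w) |>.add_const c).const_mul (w b)
  simpa using ge_of_tendsto' hlim fun n => iterate n a ha b hb

end Contraction

section Deviation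

variable {κ ρ : ℝ} {G : ℝ → ℝ → ℝ}

noncomputable def deviation (w : ℝ → ℝ) (κ ρ : ℝ) (G : ℝ → ℝ → ℝ) (a b : ℝ) : ℝ :=
  (1 - ρ) * G a b - κ * (w b * cint a b w)

theorem integrableOn_deviation (hw : Integrable w) (hw0 : ∀ u, 0 ≤ w u)
    (hw1 : ∫ u in (0 : ℝ)..1, w u = 1) (hG : IntegrableOn (G a) (Ioc 0 1))
    (ha : a ∈ Icc (0 : ℝ) 1) :
    IntegrableOn (deviation w κ ρ G a) (Ioc 0 1) :=
  (hG.const_mul (1 - ρ)).sub ((integrableOn_mul_cint hw hw0 hw1 ha).const_mul κ)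

theorem deviation_eq (hw : Integrable w) (hw0 : ∀ u, 0 ≤ w u)
    (hw1 : ∫ u in (0 : ℝ)..1, w u = 1)
    (hG : ∀ a ∈ Icc (0 : ℝ) 1, IntegrableOn (G a) (Ioc 0 1))
    (heq : ∀ a ∈ Icc (0 : ℝ) 1, ∀ b ∈ Icc (0 : ℝ) 1,
      G a b = ρ * w b * cint a b (fun u => G a u + G b u)
        + ρ * κ * w b * cint a b (fun u => ρ * w u + (1 - ρ)))
    (ha : a ∈ Icc (0 : ℝ) 1) (hb : b ∈ Icc (0 : ℝ) 1) :
    deviation w κ ρ G a b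
      = ρ * w b * cint a b (fun u => deviation w κ ρ G a u + deviation w κ ρ G b u)
        + κ * w b * (1 - ρ) ^ 2 * (ρ * cint a b (fun _ => 1) - (1 + ρ) * cint a b w) := by
  have hsplit : (fun u => deviation w κ ρ G a u + deviation w κ ρ G b u)
      = fun u => (1 - ρ) * (G a u + G b u)
          + -1 * (w u * (κ * (cint a u w + cint b u w) + 0)) := by
    funext u
    simp only [deviation]
    ring
  have hdev : cint a b (fun u => deviation w κ ρ G a u + deviation w κ ρ G b u)
      = (1 - ρ) * cint a b (fun u => G a u + G b u) - κ * cint a b w := by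
    rw [hsplit, cint_add (h := fun u => (1 - ρ) * (G a u + G b u))
      (k := fun u => -1 * (w u * (κ * (cint a u w + cint b u w) + 0)))
      (((hG a ha).add (hG b hb)).const_mul (1 - ρ))
      ((integrableOn_mul_cint_add_cint hw hw0 hw1 ha hb κ 0).const_mul (-1)) ha hb,
      cint_const_mul, cint_const_mul, cint_mul_cint_add_cint hw hw1 ha hb]
    ring
  have hload : cint a b (fun u => ρ * w u + (1 - ρ))
      = ρ * cint a b w + (1 - ρ) * cint a b (fun _ => 1) := by
    rw [cint_add (h := fun u => ρ * w u) (k := fun _ => 1 - ρ) (hw.integrableOn.const_mul ρ)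
      (integrableOn_const measure_Ioc_lt_top.ne) ha hb, cint_const_mul]
    simpa using cint_const_mul (a := a) (b := b) (h := fun _ => (1 : ℝ)) (1 - ρ)
  show (1 - ρ) * G a b - κ * (w b * cint a b w) = _
  rw [heq a ha b hb, hload]
  linear_combination (-(ρ * w b)) * hdev

theorem abs_deviation_le_cint (hw : Integrable w) (hw0 : ∀ u, 0 ≤ w u)
    (hw1 : ∫ u in (0 : ℝ)..1, w u = 1) (hκ : 0 ≤ κ) (hρ0 : 0 ≤ ρ) (hρ1 : ρ ≤ 1)
    (hG : ∀ a ∈ Icc (0 : ℝ) 1, IntegrableOn (G a) (Ioc 0 1))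
    (heq : ∀ a ∈ Icc (0 : ℝ) 1, ∀ b ∈ Icc (0 : ℝ) 1,
      G a b = ρ * w b * cint a b (fun u => G a u + G b u)
        + ρ * κ * w b * cint a b (fun u => ρ * w u + (1 - ρ)))
    (ha : a ∈ Icc (0 : ℝ) 1) (hb : b ∈ Icc (0 : ℝ) 1) :
    |deviation w κ ρ G a b|
      ≤ ρ * w b * |cint a b (fun u => deviation w κ ρ G a u + deviation w κ ρ G b u)|
        + w b * (2 * κ * (1 - ρ) ^ 2) := by
  have herr : |ρ * cint a b (fun _ => 1) - (1 + ρ) * cint a b w| ≤ 2 := by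
    obtain ⟨hL0, hL1⟩ := cint_one_mem_Icc ha hb
    obtain ⟨hP0, hP1⟩ := hw1 ▸ cint_mem_Icc hw.integrableOn (fun u _ => hw0 u) ha hb
    rw [abs_le]
    constructor <;> nlinarith
  have hwb := hw0 b
  rw [deviation_eq hw hw0 hw1 hG heq ha hb]
  refine (abs_add_le _ _).trans (add_le_add ?_ ?_)
  · rw [abs_mul, abs_of_nonneg (mul_nonneg hρ0 hwb)]
  · rw [abs_mul, abs_of_nonneg (by positivity)]
    calc κ * w b * (1 - ρ) ^ 2 * |ρ * cint a b (fun _ => 1) - (1 + ρ) * cint a b w|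
        ≤ κ * w b * (1 - ρ) ^ 2 * 2 := by grw [herr]
      _ = w b * (2 * κ * (1 - ρ) ^ 2) := by ring

theorem abs_deviation_le (hw : Integrable w) (hw0 : ∀ u, 0 ≤ w u)
    (hw1 : ∫ u in (0 : ℝ)..1, w u = 1) {M : ℝ} (hwM : ∀ u, w u ≤ M) (hκ : 0 ≤ κ)
    (hρ0 : 0 ≤ ρ) (hρ1 : ρ < 1) (hGm : ∀ a, Measurable (G a))
    {K : ℝ} (hGK : ∀ a ∈ Icc (0 : ℝ) 1, ∀ b ∈ Icc (0 : ℝ) 1, |G a b| ≤ K)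
    (heq : ∀ a ∈ Icc (0 : ℝ) 1, ∀ b ∈ Icc (0 : ℝ) 1,
      G a b = ρ * w b * cint a b (fun u => G a u + G b u)
        + ρ * κ * w b * cint a b (fun u => ρ * w u + (1 - ρ)))
    (ha : a ∈ Icc (0 : ℝ) 1) (hb : b ∈ Icc (0 : ℝ) 1) :
    |deviation w κ ρ G a b| ≤ 4 * κ * M * (1 - ρ) := by
  have h1ρ : 0 < 1 - ρ := sub_pos.2 hρ1
  have hM : 0 ≤ M := (hw0 0).trans (hwM 0)
  have hP : ∀ a ∈ Icc (0 : ℝ) 1, ∀ b ∈ Icc (0 : ℝ) 1, cint a b w ∈ Icc 0 1 :=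
    fun a ha b hb => hw1 ▸ cint_mem_Icc hw.integrableOn (fun u _ => hw0 u) ha hb
  have hG : ∀ a ∈ Icc (0 : ℝ) 1, IntegrableOn (G a) (Ioc 0 1) := fun a ha =>
    Measure.integrableOn_of_bounded measure_Ioc_lt_top.ne (hGm a).aestronglyMeasurable
      (ae_restrict_of_forall_mem measurableSet_Ioc fun u hu => hGK a ha u (Ioc_subset_Icc_self hu))
  have hbound : ∀ a ∈ Icc (0 : ℝ) 1, ∀ b ∈ Icc (0 : ℝ) 1,
      |deviation w κ ρ G a b| ≤ (1 - ρ) * K + κ * M := by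
    intro a ha b hb
    obtain ⟨hP0, hP1⟩ := hP a ha b hb
    have hwP0 : 0 ≤ w b * cint a b w := mul_nonneg (hw0 b) hP0
    have hwP : w b * cint a b w ≤ M := by nlinarith [hw0 b, hwM b]
    calc |deviation w κ ρ G a b| ≤ |(1 - ρ) * G a b| + |κ * (w b * cint a b w)| := abs_sub _ _
      _ ≤ (1 - ρ) * K + κ * M := by
        rw [abs_mul, abs_mul, abs_of_pos h1ρ, abs_of_nonneg hκ, abs_of_nonneg hwP0]
        grw [hGK a ha b hb, hwP]
  have hq : 2 * ρ * (2 * κ * (1 - ρ) ^ 2) / (1 - ρ) = 4 * ρ * κ * (1 - ρ) := by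
    field_simp
    ring
  obtain ⟨hP0, hP1⟩ := hP a ha b hb
  calc |deviation w κ ρ G a b|
      ≤ w b * (4 * ρ * κ * (1 - ρ) * cint a b w + 2 * κ * (1 - ρ) ^ 2) := by
        rw [← hq]
        exact abs_le_of_abs_le_cint hw hw0 hw1
          (fun a ha => integrableOn_deviation hw hw0 hw1 (hG a ha) ha) hbound hρ0 hρ1
          (fun a ha b hb => abs_deviation_le_cint hw hw0 hw1 hκ hρ0 hρ1.le hG heq ha hb) a ha b hb
    _ ≤ M * (4 * ρ * κ * (1 - ρ) * 1 + 2 * κ * (1 - ρ) ^ 2) := by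
        grw [hwM b, hP1]
    _ ≤ 4 * κ * M * (1 - ρ) := by nlinarith [mul_nonneg (mul_nonneg hM hκ) h1ρ.le]

end Deviation

theorem integrable_indicator_Icc {π : ℝ → ℝ} (hπmeas : Measurable π)
    (hπnn : ∀ x ∈ Icc (0 : ℝ) 1, 0 ≤ π x) {M : ℝ} (hM : ∀ x ∈ Icc (0 : ℝ) 1, π x ≤ M) :
    Integrable ((Icc (0 : ℝ) 1).indicator π) :=
  (integrable_indicator_iff measurableSet_Icc).2 <|
    Measure.integrableOn_of_bounded measure_Icc_lt_top.ne hπmeas.aestronglyMeasurable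
      (ae_restrict_of_forall_mem measurableSet_Icc fun u hu => by
        rw [Real.norm_eq_abs, abs_of_nonneg (hπnn u hu)]; exact hM u hu)

theorem tendsto_nhdsWithin_one_of_norm_sub_le {s : Set ℝ} {f : ℝ → ℝ} {L C : ℝ}
    (hf : ∀ ρ ∈ s, ‖f ρ - L‖ ≤ C * (1 - ρ)) : Filter.Tendsto f (nhdsWithin 1 s) (nhds L) := by
  rw [tendsto_iff_norm_sub_tendsto_zero]
  refine squeeze_zero' (Filter.Eventually.of_forall fun _ => norm_nonneg _)
    (eventually_mem_nhdsWithin.mono hf) ?_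
  have : Filter.Tendsto (fun ρ : ℝ => C * (1 - ρ)) (nhds 1) (nhds (C * (1 - 1))) :=
    (continuous_const.mul (continuous_const.sub continuous_id)).tendsto 1
  simpa using this.mono_left nhdsWithin_le_nhds

/-- Heavy-traffic limit of the batch-correlation part: if for each load
`ρ ∈ (0,1)` the bounded measurable function `g_ρ` solves
`g_ρ(x,y) = ρπ(y)·∫*_{u=x}^{y} [g_ρ(x,u)+g_ρ(y,u)] du
  + ρκπ(y)·∫*_{u=x}^{y} [ρπ(u)+1−ρ] du`,
then `(1−ρ)·g_ρ(x,y) → κ·π(y)·∫*_{u=x}^{y} π(u) du` as `ρ → 1⁻`. -/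
theorem heavy_traffic_limit_of_gK
    (π : ℝ → ℝ) (hπmeas : Measurable π)
    (hπnn : ∀ x ∈ Set.Icc (0 : ℝ) 1, 0 ≤ π x)
    (hπbd : ∃ M : ℝ, ∀ x ∈ Set.Icc (0 : ℝ) 1, π x ≤ M)
    (hπint : (∫ u in (0 : ℝ)..1, π u) = 1)
    (κ : ℝ) (hκ : 0 ≤ κ)
    (g : ℝ → ℝ → ℝ → ℝ)
    (hgmeas : ∀ ρ ∈ Set.Ioo (0 : ℝ) 1, Measurable (Function.uncurry (g ρ)))
    (hgbd : ∀ ρ ∈ Set.Ioo (0 : ℝ) 1,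
      ∃ M : ℝ, ∀ x ∈ Set.Icc (0 : ℝ) 1, ∀ y ∈ Set.Icc (0 : ℝ) 1, |g ρ x y| ≤ M)
    (heq : ∀ ρ ∈ Set.Ioo (0 : ℝ) 1, ∀ x ∈ Set.Icc (0 : ℝ) 1, ∀ y ∈ Set.Icc (0 : ℝ) 1,
      g ρ x y = ρ * π y * cint x y (fun u => g ρ x u + g ρ y u)
        + ρ * κ * π y * cint x y (fun u => ρ * π u + (1 - ρ))) :
    ∀ x ∈ Set.Icc (0 : ℝ) 1, ∀ y ∈ Set.Icc (0 : ℝ) 1,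
      Filter.Tendsto (fun ρ => (1 - ρ) * g ρ x y)
        (nhdsWithin 1 (Set.Ioo (0 : ℝ) 1)) (nhds (κ * π y * cint x y π)) := by
  intro x hx y hy
  obtain ⟨M, hM⟩ := hπbd
  -- the extension of `π` by zero is integrable on `ℝ`, so its primitives are continuous
  set w := (Icc (0 : ℝ) 1).indicator π
  have hwπ : EqOn w π (Icc 0 1) := fun u hu => indicator_of_mem hu π
  have hw : Integrable w := integrable_indicator_Icc hπmeas hπnn hM
  have hw0 : ∀ u, 0 ≤ w u := indicator_nonneg hπnn
  have hwM : ∀ u, w u ≤ M := fun u => indicator_apply_le' (hM u) fun _ =>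
    (hπnn 0 (left_mem_Icc.2 zero_le_one)).trans (hM 0 (left_mem_Icc.2 zero_le_one))
  have hw1 : ∫ u in (0 : ℝ)..1, w u = 1 := by
    rw [intervalIntegral.integral_congr (by rwa [uIcc_of_le zero_le_one]), hπint]
  refine tendsto_nhdsWithin_one_of_norm_sub_le (C := 4 * κ * M) fun ρ hρ => ?_
  obtain ⟨K, hK⟩ := hgbd ρ hρ
  have heqw : ∀ a ∈ Icc (0 : ℝ) 1, ∀ b ∈ Icc (0 : ℝ) 1,
      g ρ a b = ρ * w b * cint a b (fun u => g ρ a u + g ρ b u)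
        + ρ * κ * w b * cint a b (fun u => ρ * w u + (1 - ρ)) := fun a ha b hb => by
    rw [hwπ hb, cint_congr (h := fun u => ρ * w u + (1 - ρ)) (k := fun u => ρ * π u + (1 - ρ))
      ha hb fun u hu => by simp only [hwπ hu]]
    exact heq ρ hρ a ha b hb
  have := abs_deviation_le hw hw0 hw1 hwM hκ hρ.1.le hρ.2
    (fun _ => (hgmeas ρ hρ).of_uncurry_left) hK heqw hx hy
  rwa [deviation, hwπ hy, cint_congr hx hy hwπ, ← mul_assoc] at this
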